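/- The linear map M_F : ℝ^15 → ℝ^15 defined below has rank exactly 11. -/

import Mathlib

/-!
Let `I` be the rows `d47, …, d52, d54, d56, d57, d58, d60` and `J` the columns
`c54, …, c57, c59, …, c62, c64, c65, c68` of `M_F`. The minor `M_F[I, J]` has determinant `±1`,
so its inverse `Q` is integral. The skeleton identity `M_F = M_F[:, J] * Q * M_F[I, :]` makes `M_F`
factor through `ℝ¹¹`, so its rank is at most `11`, while `M_F[I, J] * Q = 1` gives at least `11`.
Both identities are integral, so they are checked by `decide` on an integer copy of `M_F`.
-/

noncomputable section

/-- The coefficient matrix `M_F` of the type-F divergence system: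
rows are `d47,…,d61`, columns are `c54,…,c68`. -/
def MF : Matrix (Fin 15) (Fin 15) ℝ :=
  !![0, 0, 0, 1, 1, 0, 0, 0, 0, 2, 0, 0, 0, 0, 0;
    0, 0, 1, 1, 0, 0, 0, 0, 0, 0, 0, 0, 0, 1, 0;
    0, 0, 0, 1, 0, 1, 0, 0, 0, 0, 0, 0, 1, 0, 0;
    0, 0, 0, 0, 1, 0, 0, 0, 1, 0, 0, 0, 0, 1, 0;
    0, 1, 0, 0, 1, 0, 0, 0, 0, 0, 0, 0, 1, 0, 0;
    0, 0, 0, 0, 0, 1, 0, 0, 1, 0, 1, 0, 0, 0, 0;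
    0, 1, 0, 0, 0, 1, 0, 0, 0, 0, 0, 2, 0, 0, 0;
    1, 0, 0, 0, 0, 0, 1, 0, 0, 0, 0, 0, 1, 0, 0;
    0, 0, 0, 0, 0, 0, 1, 1, 0, 0, 1, 0, 0, 0, 0;
    0, 0, 0, 0, 0, 0, 1, 0, 0, 0, 0, 1, 0, 0, 0;
    1, 0, 0, 0, 0, 0, 0, 1, 0, 0, 0, 0, 0, 1, 0;
    0, 0, 0, 0, 0, 0, 0, 1, 0, 0, 0, 0, 0, 0, 1;
    0, 0, 1, 0, 0, 0, 0, 0, 1, 0, 0, 0, 0, 0, 2;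
    1, 0, 0, 0, 0, 0, 0, 0, 0, 1, 0, 0, 0, 0, 0;
    0, 1, 1, 0, 0, 0, 0, 0, 0, 0, 1, 0, 0, 0, 0]

namespace Matrix

variable {m n k R : Type*} [Fintype n] [Fintype k] [CommSemiring R] [StrongRankCondition R]

theorem card_le_rank_of_submatrix_mul_eq_one [DecidableEq k] (M : Matrix m n R) (r : k → m)
    (c : k → n) {Q : Matrix k k R} (hQ : M.submatrix r c * Q = 1) : Fintype.card k ≤ M.rank :=
  calc Fintype.card k = (M.submatrix r c * Q).rank := by rw [hQ, rank_one]
    _ ≤ (M.submatrix r c).rank := rank_mul_le_left _ _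
    _ ≤ M.rank := rank_submatrix_le _ _ _

theorem rank_eq_card_of_submatrix_mul_eq_one [DecidableEq k] (M : Matrix m n R) (r : k → m)
    (c : k → n) {Q : Matrix k k R} (hQ : M.submatrix r c * Q = 1)
    (hM : M = M.submatrix id c * Q * M.submatrix r id) : M.rank = Fintype.card k := by
  refine le_antisymm ?_ (card_le_rank_of_submatrix_mul_eq_one M r c hQ)
  rw [hM]
  exact (rank_mul_le_left _ _).trans (rank_le_card_width _)

end Matrix

def MFInt : Matrix (Fin 15) (Fin 15) ℤ :=
  !![0, 0, 0, 1, 1, 0, 0, 0, 0, 2, 0, 0, 0, 0, 0;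
    0, 0, 1, 1, 0, 0, 0, 0, 0, 0, 0, 0, 0, 1, 0;
    0, 0, 0, 1, 0, 1, 0, 0, 0, 0, 0, 0, 1, 0, 0;
    0, 0, 0, 0, 1, 0, 0, 0, 1, 0, 0, 0, 0, 1, 0;
    0, 1, 0, 0, 1, 0, 0, 0, 0, 0, 0, 0, 1, 0, 0;
    0, 0, 0, 0, 0, 1, 0, 0, 1, 0, 1, 0, 0, 0, 0;
    0, 1, 0, 0, 0, 1, 0, 0, 0, 0, 0, 2, 0, 0, 0;
    1, 0, 0, 0, 0, 0, 1, 0, 0, 0, 0, 0, 1, 0, 0;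
    0, 0, 0, 0, 0, 0, 1, 1, 0, 0, 1, 0, 0, 0, 0;
    0, 0, 0, 0, 0, 0, 1, 0, 0, 0, 0, 1, 0, 0, 0;
    1, 0, 0, 0, 0, 0, 0, 1, 0, 0, 0, 0, 0, 1, 0;
    0, 0, 0, 0, 0, 0, 0, 1, 0, 0, 0, 0, 0, 0, 1;
    0, 0, 1, 0, 0, 0, 0, 0, 1, 0, 0, 0, 0, 0, 2;
    1, 0, 0, 0, 0, 0, 0, 0, 0, 1, 0, 0, 0, 0, 0;
    0, 1, 1, 0, 0, 0, 0, 0, 0, 0, 1, 0, 0, 0, 0]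

theorem MFInt_map_intCast : MFInt.map (Int.castRingHom ℝ) = MF := by
  ext i j
  fin_cases i <;> fin_cases j <;> simp [MFInt, MF]

def MFRows : Fin 11 → Fin 15 := ![0, 1, 2, 3, 4, 5, 7, 9, 10, 11, 13]

def MFCols : Fin 11 → Fin 15 := ![0, 1, 2, 3, 5, 6, 7, 8, 10, 11, 14]

def MFMinorInv : Matrix (Fin 11) (Fin 11) ℤ :=
  !![0, 0, 0, 0, 0, 0, 0, 0, 0, 0, 1;
    0, 0, 0, 0, 1, 0, 0, 0, 0, 0, 0;
    -1, 1, 0, 0, 0, 0, 0, 0, 0, 0, 0;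
    1, 0, 0, 0, 0, 0, 0, 0, 0, 0, 0;
    -1, 0, 1, 0, 0, 0, 0, 0, 0, 0, 0;
    0, 0, 0, 0, 0, 0, 1, 0, 0, 0, -1;
    0, 0, 0, 0, 0, 0, 0, 0, 1, 0, -1;
    0, 0, 0, 1, 0, 0, 0, 0, 0, 0, 0;
    1, 0, -1, -1, 0, 1, 0, 0, 0, 0, 0;
    0, 0, 0, 0, 0, 0, -1, 1, 0, 0, 1;
    0, 0, 0, 0, 0, 0, 0, 0, -1, 1, 1]

theorem MFInt_submatrix_mul_minorInv : MFInt.submatrix MFRows MFCols * MFMinorInv = 1 := by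
  decide

theorem MFInt_eq_skeleton :
    MFInt = MFInt.submatrix id MFCols * MFMinorInv * MFInt.submatrix MFRows id := by
  decide

/-- The linear map `M_F : ℝ^15 → ℝ^15` has rank exactly 11. -/
theorem MF_rank_eq_11 : MF.rank = 11 := by
  have hQ : MF.submatrix MFRows MFCols * MFMinorInv.map (Int.castRingHom ℝ) = 1 := by
    rw [← MFInt_map_intCast, Matrix.submatrix_map, ← Matrix.map_mul, MFInt_submatrix_mul_minorInv,
      Matrix.map_one _ (map_zero _) (map_one _)]
  have hM : MF = MF.submatrix id MFCols * MFMinorInv.map (Int.castRingHom ℝ) *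
      MF.submatrix MFRows id := by
    rw [← MFInt_map_intCast, Matrix.submatrix_map, Matrix.submatrix_map, ← Matrix.map_mul, ← Matrix.map_mul,
      ← MFInt_eq_skeleton]
  simpa using Matrix.rank_eq_card_of_submatrix_mul_eq_one MF MFRows MFCols hQ hM
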